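/- Let S have (p,δ)-structure with characteristics (κ₀, κ₁, p) for some p ∈ (1,∞) and δ ≥ 0, and let F be the associated tensor field. For symmetric A, B ∈ ℝ^{3×3}_sym with A ≠ 0 (or δ > 0) define 𝒫(A, B) := Σ_{k,l,m,n=1}^{3} ∂_{kl}S_{mn}(A) B_{kl} B_{mn}. Then there exist constants c, C > 0 depending only on the characteristics (κ₀, κ₁, p) of S such that c·φ''(|A|)·|B|² ≤ 𝒫(A, B) ≤ C·φ''(|A|)·|B|² and c·|DF(A)[B]|² ≤ 𝒫(A, B) ≤ C·|DF(A)[B]|², where φ = φ_{p,δ} and DF(A)[B] is the directional derivative of F at A in direction B. In particular, for a smooth symmetric tensor field Q this yields 𝒫_i(Q) := ∂_i S(Q)·∂_i Q ~ φ''(|Q|)|∂_i Q|² ~ |∂_i F(Q)|² for i = 1,2,3. -/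

import Mathlib

noncomputable section

open Matrix

attribute [local instance] Matrix.normedAddCommGroup Matrix.normedSpace

/-- 3×3 real matrices. -/
abbrev Mat3 := Matrix (Fin 3) (Fin 3) ℝ

/-- The symmetric part `P^sym = (P + Pᵀ)/2` of a matrix. -/
def msym (P : Mat3) : Mat3 := (1 / 2 : ℝ) • (P + Pᵀ)

/-- The scalar product of tensors `A·B = Σ_{i,j} A_{ij} B_{ij}`. -/
def mdot (A B : Mat3) : ℝ := ∑ i, ∑ j, A i j * B i j

/-- The Euclidean (Frobenius) norm `|A| = √(A·A)`. -/
def mnorm (A : Mat3) : ℝ := Real.sqrt (mdot A A)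

/-- The N-function `φ_{p,δ}(t) = ∫₀ᵗ (δ+s)^{p-2} s ds`. -/
def phi (p δ t : ℝ) : ℝ := ∫ s in (0:ℝ)..t, (δ + s) ^ (p - 2) * s

/-- Its first derivative `φ'(t) = (δ+t)^{p-2} t`. -/
def phi' (p δ t : ℝ) : ℝ := (δ + t) ^ (p - 2) * t

/-- Its second derivative `φ''(t) = (p-2)(δ+t)^{p-3} t + (δ+t)^{p-2}` (for `t > 0`). -/
def phi'' (p δ t : ℝ) : ℝ := (p - 2) * (δ + t) ^ (p - 3) * t + (δ + t) ^ (p - 2)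

/-- The partial derivative `∂_{kl} S_{ij}(P)` of the `(i,j)` component of `S`
with respect to the `(k,l)` matrix entry. -/
def DS (S : Mat3 → Mat3) (P : Mat3) (k l i j : Fin 3) : ℝ :=
  fderiv ℝ S P (single k l 1) i j

/-- A tensor field `S` has `(p,δ)`-structure with characteristics `(κ₀, κ₁, p)`. -/
structure PDelta (p δ κ₀ κ₁ : ℝ) (S : Mat3 → Mat3) : Prop where
  cont : Continuous S
  smooth : ContDiffOn ℝ 1 S {(0 : Mat3)}ᶜ
  symval : ∀ P, (S P)ᵀ = S P
  symdep : ∀ P, S P = S (msym P)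
  zero : S 0 = 0
  lower : ∀ P Q : Mat3, msym P ≠ 0 →
    κ₀ * phi'' p δ (mnorm (msym P)) * (mnorm (msym Q)) ^ 2 ≤
      ∑ i, ∑ j, ∑ k, ∑ l, DS S P k l i j * Q i j * Q k l
  upper : ∀ P : Mat3, msym P ≠ 0 → ∀ i j k l : Fin 3,
    |DS S P k l i j| ≤ κ₁ * phi'' p δ (mnorm (msym P))

/-- The tensor field `F(P) = (δ + |P^sym|)^{(p-2)/2} P^sym` associated to `S`. -/
def Fassoc (p δ : ℝ) (P : Mat3) : Mat3 :=
  (δ + mnorm (msym P)) ^ ((p - 2) / 2) • msym P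

/-- `𝒫(A,B) = Σ_{k,l,m,n} ∂_{kl}S_{mn}(A) B_{kl} B_{mn}`. -/
def Pquad (S : Mat3 → Mat3) (A B : Mat3) : ℝ :=
  ∑ k, ∑ l, ∑ m, ∑ n, DS S A k l m n * B k l * B m n

/-!
The quantities `𝒫(A,B)`, `φ''(|A|) |B|²` and `|DF(A)[B]|²` are all comparable to
`(δ + |A|)^(p-2) |B|²`. For `φ''` this is the identity `φ''(t) = (δ + t)^(p-3) (δ + (p-1) t)`;
for `𝒫` it is the `(p,δ)`-structure itself, the upper bound summing the entrywise bound over the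
81 entries. For `F`, read as `x ↦ (δ + ‖x‖)^e x` with `e = (p-2)/2` on the Euclidean space of
entries, `‖DF(x) h‖²` lies between `(δ + ‖x‖)^(2e) ‖h‖²` and
`(δ + ‖x‖)^(2e-2) (δ + (e+1)‖x‖)² ‖h‖²`, and `e + 1 = p/2 > 0`.
-/

open Filter Topology

def Comparable (c C x y : ℝ) : Prop := c * y ≤ x ∧ x ≤ C * y

namespace Comparable

variable {c C c₁ C₁ c₂ C₂ c' C' x y z : ℝ}

lemma trans (h₁ : Comparable c₁ C₁ x y) (h₂ : Comparable c₂ C₂ y z) (hc₁ : 0 ≤ c₁)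
    (hC₁ : 0 ≤ C₁) : Comparable (c₁ * c₂) (C₁ * C₂) x z := by
  constructor
  · calc c₁ * c₂ * z = c₁ * (c₂ * z) := mul_assoc _ _ _
      _ ≤ c₁ * y := mul_le_mul_of_nonneg_left h₂.1 hc₁
      _ ≤ x := h₁.1
  · calc x ≤ C₁ * y := h₁.2
      _ ≤ C₁ * (C₂ * z) := mul_le_mul_of_nonneg_left h₂.2 hC₁
      _ = C₁ * C₂ * z := (mul_assoc _ _ _).symm

lemma symm (h : Comparable c C x y) (hc : 0 < c) (hC : 0 < C) : Comparable C⁻¹ c⁻¹ y x :=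
  ⟨(inv_mul_le_iff₀ hC).2 h.2, (le_inv_mul_iff₀ hc).2 h.1⟩

lemma mono (h : Comparable c C x y) (hy : 0 ≤ y) (hc : c' ≤ c) (hC : C ≤ C') :
    Comparable c' C' x y :=
  ⟨(mul_le_mul_of_nonneg_right hc hy).trans h.1, h.2.trans (mul_le_mul_of_nonneg_right hC hy)⟩

lemma mul_left (h : Comparable c C x y) (hz : 0 ≤ z) : Comparable c C (z * x) (z * y) := by
  constructor
  · rw [mul_left_comm]; exact mul_le_mul_of_nonneg_left h.1 hz
  · rw [mul_left_comm]; exact mul_le_mul_of_nonneg_left h.2 hz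

lemma mul_right (h : Comparable c C x y) (hz : 0 ≤ z) : Comparable c C (x * z) (y * z) := by
  simpa only [mul_comm _ z] using h.mul_left hz

lemma sq (h : Comparable c C x y) (hc : 0 ≤ c) (hy : 0 ≤ y) :
    Comparable (c ^ 2) (C ^ 2) (x ^ 2) (y ^ 2) := by
  have hcy : 0 ≤ c * y := mul_nonneg hc hy
  constructor
  · rw [← mul_pow]; exact pow_le_pow_left₀ hcy h.1 2
  · rw [← mul_pow]; exact pow_le_pow_left₀ (hcy.trans h.1) h.2 2

lemma of_tendsto {α : Type*} {l : Filter α} [l.NeBot] {f g : α → ℝ} (hf : Tendsto f l (𝓝 x))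
    (hg : Tendsto g l (𝓝 y)) (h : ∀ᶠ a in l, Comparable c C (f a) (g a)) : Comparable c C x y :=
  ⟨le_of_tendsto_of_tendsto (hg.const_mul c) hf (h.mono fun _ ha => ha.1),
    le_of_tendsto_of_tendsto hf (hg.const_mul C) (h.mono fun _ ha => ha.2)⟩

end Comparable

lemma comparable_add_mul {m M k δ t : ℝ} (hm1 : m ≤ 1) (hmk : m ≤ k) (h1M : 1 ≤ M) (hkM : k ≤ M)
    (hδ : 0 ≤ δ) (ht : 0 ≤ t) : Comparable m M (δ + k * t) (δ + t) :=
  ⟨by nlinarith, by nlinarith⟩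

section Phi

variable {p δ t m M : ℝ}

lemma phi''_eq_mul (h : 0 < δ + t) : phi'' p δ t = (δ + t) ^ (p - 3) * (δ + (p - 1) * t) := by
  have : (δ + t) ^ (p - 2) = (δ + t) ^ (p - 3) * (δ + t) := by
    rw [← Real.rpow_add_one h.ne']; ring_nf
  rw [phi'', this]; ring

lemma phi''_comparable (hm1 : m ≤ 1) (hmp : m ≤ p - 1) (h1M : 1 ≤ M) (hpM : p - 1 ≤ M)
    (hδ : 0 ≤ δ) (ht : 0 ≤ t) (h : 0 < δ + t) :
    Comparable m M (phi'' p δ t) ((δ + t) ^ (p - 2)) := by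
  rw [phi''_eq_mul h, show p - 2 = p - 3 + 1 by ring, Real.rpow_add_one h.ne']
  exact (comparable_add_mul hm1 hmp h1M hpM hδ ht).mul_left (Real.rpow_nonneg h.le _)

lemma continuousAt_phi'' (h : 0 < δ + t) : ContinuousAt (phi'' p δ) t := by
  unfold phi''
  fun_prop (disch := exact Or.inl h.ne')

end Phi

lemma hasFDerivAt_smul_self_of_continuousAt {𝕜 E : Type*} [NontriviallyNormedField 𝕜]
    [NormedAddCommGroup E] [NormedSpace 𝕜 E] {φ : E → 𝕜} (hφ : ContinuousAt φ 0) :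
    HasFDerivAt (fun x => φ x • x) (φ 0 • ContinuousLinearMap.id 𝕜 E) 0 := by
  rw [hasFDerivAt_iff_isLittleO_nhds_zero]
  have hφ' : (fun x => φ x - φ 0) =o[𝓝 0] (fun _ => (1 : 𝕜)) :=
    (Asymptotics.isLittleO_one_iff 𝕜).2 (tendsto_sub_nhds_zero_iff.2 hφ.tendsto)
  simpa [sub_smul] using hφ'.smul_isBigO (Asymptotics.isBigO_refl (fun x : E => x) (𝓝 0))

section RadialPow

variable {E : Type*} [NormedAddCommGroup E] [InnerProductSpace ℝ E]

lemma hasFDerivAt_norm_of_ne_zero {x : E} (hx : x ≠ 0) :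
    HasFDerivAt (‖·‖) (‖x‖⁻¹ • innerSL ℝ x) x := by
  have h := (Real.hasDerivAt_sqrt (by positivity : ‖x‖ ^ 2 ≠ 0)).comp_hasFDerivAt x
    (hasStrictFDerivAt_norm_sq x).hasFDerivAt
  rw [Real.sqrt_sq (norm_nonneg x)] at h
  refine (h.congr_fderiv ?_).congr_of_eventuallyEq (Eventually.of_forall fun y => ?_)
  · ext y
    simp only [one_div, _root_.mul_inv_rev, _root_.smul_apply, coe_innerSL_apply, nsmul_eq_mul,
      Nat.cast_ofNat, smul_eq_mul]
    field_simp
  · simp [Real.sqrt_sq (norm_nonneg y)]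

def radialPow (δ e : ℝ) (x : E) : E := (δ + ‖x‖) ^ e • x

def radialPowDeriv (δ e : ℝ) (x : E) : E →L[ℝ] E :=
  (δ + ‖x‖) ^ e • ContinuousLinearMap.id ℝ E +
    (e * (δ + ‖x‖) ^ (e - 1) * ‖x‖⁻¹) • (innerSL ℝ x).smulRight x

variable {δ e : ℝ} {x : E}

lemma radialPowDeriv_apply (h : E) :
    radialPowDeriv δ e x h =
      (δ + ‖x‖) ^ e • h + (e * (δ + ‖x‖) ^ (e - 1) * (inner ℝ x h / ‖x‖)) • x := by
  simp only [radialPowDeriv, _root_.add_apply, _root_.smul_apply, ContinuousLinearMap.id_apply,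
    ContinuousLinearMap.smulRight_apply, innerSL_apply_apply, smul_smul]
  ring_nf

lemma hasFDerivAt_radialPow (hx : δ + ‖x‖ ≠ 0) :
    HasFDerivAt (radialPow δ e) (radialPowDeriv δ e x) x := by
  unfold radialPow
  rcases eq_or_ne x 0 with rfl | hx0
  · have hδ : δ ≠ 0 := by simpa using hx
    have hφ : ContinuousAt (fun y : E => (δ + ‖y‖) ^ e) 0 := by
      fun_prop (disch := simpa using Or.inl hδ)
    simpa [radialPowDeriv] using hasFDerivAt_smul_self_of_continuousAt hφ
  · have h := ((Real.hasDerivAt_rpow_const (p := e) (Or.inl hx)).comp_hasFDerivAt x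
      ((hasFDerivAt_norm_of_ne_zero hx0).const_add δ)).smul (hasFDerivAt_id x)
    refine h.congr_fderiv ?_
    ext h
    simp [radialPowDeriv, smul_smul]

lemma norm_radialPowDeriv_apply_sq_comparable {m M : ℝ} (hm0 : 0 ≤ m) (hm1 : m ≤ 1)
    (hme : m ≤ e + 1) (h1M : 1 ≤ M) (heM : e + 1 ≤ M) (hδ : 0 ≤ δ) (hx : 0 < δ + ‖x‖) (h : E) :
    Comparable (m ^ 2) (M ^ 2) (‖radialPowDeriv δ e x h‖ ^ 2) ((δ + ‖x‖) ^ (2 * e) * ‖h‖ ^ 2) := by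
  set t := ‖x‖ with ht
  set g := δ + t with hg
  set a := g ^ e with ha
  set ρ := inner ℝ x h / t with hρdef
  have hinner : inner ℝ x h = ρ * t := by
    rcases eq_or_ne x 0 with rfl | hx0
    · simp [ht]
    · exact (div_mul_cancel₀ _ (norm_ne_zero_iff.2 hx0)).symm
  have hρ : ρ ^ 2 ≤ ‖h‖ ^ 2 := by
    rw [← sq_abs ρ]
    refine pow_le_pow_left₀ (abs_nonneg ρ) ?_ 2
    rw [abs_div, abs_norm]
    exact div_le_of_le_mul₀ (norm_nonneg x) (norm_nonneg h)
      ((abs_real_inner_le_norm x h).trans_eq (mul_comm _ _))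
  have hD : radialPowDeriv δ e x h = a • h + (e * a / g * ρ) • x := by
    rw [radialPowDeriv_apply, ← ht, ← hg, ← ha, Real.rpow_sub_one hx.ne', ← ha, ← hρdef]
    ring_nf
  have key : ‖radialPowDeriv δ e x h‖ ^ 2 * g ^ 2 =
      a ^ 2 * (g ^ 2 * (‖h‖ ^ 2 - ρ ^ 2) + (δ + (e + 1) * t) ^ 2 * ρ ^ 2) := by
    rw [hD, norm_add_sq_real, norm_smul, norm_smul, real_inner_smul_left, real_inner_smul_right,
      real_inner_comm, hinner, Real.norm_eq_abs, Real.norm_eq_abs, mul_pow, mul_pow, sq_abs, sq_abs,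
      ← ht]
    field_simp
    ring
  have hQ : Comparable (m ^ 2) (M ^ 2)
      (g ^ 2 * (‖h‖ ^ 2 - ρ ^ 2) + (δ + (e + 1) * t) ^ 2 * ρ ^ 2) (g ^ 2 * ‖h‖ ^ 2) := by
    obtain ⟨hlo, hhi⟩ :=
      (comparable_add_mul hm1 hme h1M heM hδ (norm_nonneg x)).sq hm0 hx.le
    have hm2 : m ^ 2 ≤ 1 := pow_le_one₀ hm0 hm1
    have hM2 : 1 ≤ M ^ 2 := one_le_pow₀ h1M
    have hg2 : 0 ≤ g ^ 2 * (‖h‖ ^ 2 - ρ ^ 2) := mul_nonneg (sq_nonneg g) (sub_nonneg.2 hρ)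
    constructor <;> nlinarith [sq_nonneg ρ]
  have hag : a ^ 2 = g ^ (2 * e) := by
    rw [mul_comm, Real.rpow_mul hx.le, Real.rpow_two]
  have hg2 : g ^ 2 ≠ 0 := pow_ne_zero 2 hx.ne'
  convert hQ.mul_left (div_nonneg (sq_nonneg a) (sq_nonneg g)) using 1
  · rw [div_mul_eq_mul_div, ← key, mul_div_cancel_right₀ _ hg2]
  · rw [← hag]
    field_simp

end RadialPow

lemma sum_sum_mul_mul_le_card_mul {ι : Type*} [Fintype ι] {D : ι → ι → ℝ} {K : ℝ}
    (hD : ∀ a b, |D a b| ≤ K) (x : ι → ℝ) :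
    ∑ a, ∑ b, D a b * x a * x b ≤ Fintype.card ι * K * ∑ a, x a ^ 2 := by
  rcases isEmpty_or_nonempty ι with hι | ⟨⟨a₀⟩⟩
  · simp
  have hK : 0 ≤ K := (abs_nonneg _).trans (hD a₀ a₀)
  calc ∑ a, ∑ b, D a b * x a * x b ≤ ∑ a, ∑ b, K * (|x a| * |x b|) := by
        refine Finset.sum_le_sum fun a _ => Finset.sum_le_sum fun b _ => ?_
        rw [mul_assoc, ← abs_mul]
        exact (le_abs_self _).trans (by rw [abs_mul]; gcongr; exact hD a b)
    _ = K * (∑ a, |x a|) ^ 2 := by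
        rw [sq, Finset.sum_mul_sum, Finset.mul_sum]
        simp only [Finset.mul_sum]
    _ ≤ K * (Fintype.card ι * ∑ a, |x a| ^ 2) := by
        gcongr
        exact sq_sum_le_card_mul_sum_sq
    _ = Fintype.card ι * K * ∑ a, x a ^ 2 := by simp only [sq_abs]; ring

namespace Mat3

def toEuclideanSpace : Mat3 ≃L[ℝ] EuclideanSpace ℝ (Fin 3 × Fin 3) :=
  LinearEquiv.toContinuousLinearEquiv
    ((LinearEquiv.curry ℝ ℝ (Fin 3) (Fin 3)).symm.trans (WithLp.linearEquiv 2 ℝ _).symm)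

lemma toEuclideanSpace_apply (A : Mat3) (a : Fin 3 × Fin 3) :
    toEuclideanSpace A a = A a.1 a.2 :=
  rfl

end Mat3

open Mat3

lemma mdot_eq_inner (A B : Mat3) :
    mdot A B = inner ℝ (toEuclideanSpace A) (toEuclideanSpace B) := by
  simp [mdot, PiLp.inner_apply, toEuclideanSpace_apply, Fintype.sum_prod_type, mul_comm]

lemma mnorm_eq_norm (A : Mat3) : mnorm A = ‖toEuclideanSpace A‖ := by
  rw [mnorm, mdot_eq_inner, real_inner_self_eq_norm_sq, Real.sqrt_sq (norm_nonneg _)]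

lemma mnorm_sq_eq_sum (A : Mat3) : mnorm A ^ 2 = ∑ a : Fin 3 × Fin 3, A a.1 a.2 ^ 2 := by
  rw [mnorm_eq_norm, EuclideanSpace.real_norm_sq_eq]; rfl

lemma mnorm_nonneg (A : Mat3) : 0 ≤ mnorm A := Real.sqrt_nonneg _

lemma mnorm_pos {A : Mat3} (hA : A ≠ 0) : 0 < mnorm A := by
  rw [mnorm_eq_norm]
  exact norm_pos_iff.2 ((map_ne_zero_iff _ toEuclideanSpace.injective).2 hA)

lemma mnorm_zero : mnorm 0 = 0 := by rw [mnorm_eq_norm, map_zero, norm_zero]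

lemma msym_eq_self {A : Mat3} (hA : Aᵀ = A) : msym A = A := by
  rw [msym, hA, ← two_smul ℝ A, smul_smul]; norm_num

def msymL : Mat3 →L[ℝ] Mat3 :=
  LinearMap.toContinuousLinearMap
    ((1 / 2 : ℝ) • (LinearMap.id + (transposeLinearEquiv (Fin 3) (Fin 3) ℝ ℝ).toLinearMap))

lemma msymL_apply (P : Mat3) : msymL P = msym P := rfl

lemma Fassoc_eq_comp (p δ : ℝ) :
    Fassoc p δ =
      toEuclideanSpace.symm ∘ radialPow δ ((p - 2) / 2) ∘ toEuclideanSpace ∘ msymL := by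
  funext P
  simp [Fassoc, radialPow, mnorm_eq_norm, msymL_apply]

lemma fderiv_Fassoc_apply {p δ : ℝ} {A B : Mat3} (hA : Aᵀ = A) (hB : Bᵀ = B)
    (hγ : δ + mnorm A ≠ 0) :
    fderiv ℝ (Fassoc p δ) A B =
      toEuclideanSpace.symm
        (radialPowDeriv δ ((p - 2) / 2) (toEuclideanSpace A) (toEuclideanSpace B)) := by
  have hmA : toEuclideanSpace (msymL A) = toEuclideanSpace A := by rw [msymL_apply, msym_eq_self hA]
  have hR := hasFDerivAt_radialPow (e := (p - 2) / 2) (x := toEuclideanSpace (msymL A))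
    (by rwa [hmA, ← mnorm_eq_norm])
  have h := toEuclideanSpace.symm.hasFDerivAt.comp A
    (hR.comp A (toEuclideanSpace.hasFDerivAt.comp A msymL.hasFDerivAt))
  -- `show` and `change` reconcile the instance path of `msymL` (`Matrix.addCommGroup`) with the
  -- normed one of the goal
  rw [show fderiv ℝ (Fassoc p δ) A = _ from
    (h.congr_of_eventuallyEq (.of_forall (congrFun (Fassoc_eq_comp p δ)))).fderiv]
  change toEuclideanSpace.symm (radialPowDeriv _ _ (toEuclideanSpace (msymL A))
    (toEuclideanSpace (msymL B))) = _
  rw [msymL_apply, msymL_apply, msym_eq_self hA, msym_eq_self hB]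

lemma mnorm_fderiv_Fassoc_sq_comparable {p δ m M : ℝ} {A B : Mat3} (hm0 : 0 ≤ m) (hm1 : m ≤ 1)
    (hmp : m ≤ p / 2) (h1M : 1 ≤ M) (hpM : p / 2 ≤ M) (hδ : 0 ≤ δ) (hA : Aᵀ = A) (hB : Bᵀ = B)
    (hγ : 0 < δ + mnorm A) :
    Comparable (m ^ 2) (M ^ 2) (mnorm (fderiv ℝ (Fassoc p δ) A B) ^ 2)
      ((δ + mnorm A) ^ (p - 2) * mnorm B ^ 2) := by
  rw [fderiv_Fassoc_apply hA hB hγ.ne', mnorm_eq_norm, mnorm_eq_norm, mnorm_eq_norm,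
    ContinuousLinearEquiv.apply_symm_apply]
  rw [mnorm_eq_norm] at hγ
  have h := norm_radialPowDeriv_apply_sq_comparable (e := (p - 2) / 2) hm0 hm1 (by linarith) h1M
    (by linarith) hδ hγ (toEuclideanSpace B)
  rwa [show 2 * ((p - 2) / 2) = p - 2 by ring] at h

lemma fderiv_apply_eq_sum_DS (S : Mat3 → Mat3) (A B : Mat3) (i j : Fin 3) :
    fderiv ℝ S A B i j = ∑ k, ∑ l, DS S A k l i j * B k l := by
  conv_lhs => rw [matrix_eq_sum_single B]
  simp only [map_sum, Matrix.sum_apply, DS]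
  refine Finset.sum_congr rfl fun k _ => Finset.sum_congr rfl fun l _ => ?_
  rw [show single k l (B k l) = B k l • single k l 1 by rw [smul_single, smul_eq_mul, mul_one],
    map_smul, Matrix.smul_apply, smul_eq_mul, mul_comm]

lemma mdot_fderiv_eq_sum_DS (S : Mat3 → Mat3) (A B : Mat3) :
    mdot (fderiv ℝ S A B) B = ∑ i, ∑ j, ∑ k, ∑ l, DS S A k l i j * B i j * B k l := by
  simp only [mdot, fderiv_apply_eq_sum_DS, Finset.sum_mul, mul_right_comm]

lemma Pquad_eq_mdot (S : Mat3 → Mat3) (A B : Mat3) : Pquad S A B = mdot (fderiv ℝ S A B) B := by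
  rw [mdot_fderiv_eq_sum_DS, Pquad]
  conv_lhs => enter [2, k]; rw [Finset.sum_comm]
  conv_lhs => enter [2, k, 2, m]; rw [Finset.sum_comm]
  rw [Finset.sum_comm]
  conv_lhs => enter [2, m]; rw [Finset.sum_comm]
  simp only [mul_right_comm]

namespace PDelta

variable {p δ κ₀ κ₁ : ℝ} {S : Mat3 → Mat3}

lemma Pquad_comparable_of_msym_ne_zero (hS : PDelta p δ κ₀ κ₁ S) {P B : Mat3} (hP : msym P ≠ 0)
    (hB : Bᵀ = B) :
    Comparable κ₀ (9 * κ₁) (Pquad S P B) (phi'' p δ (mnorm (msym P)) * mnorm B ^ 2) := by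
  constructor
  · have h := hS.lower P B hP
    rwa [msym_eq_self hB, ← mdot_fderiv_eq_sum_DS, ← Pquad_eq_mdot, mul_assoc] at h
  · have h := sum_sum_mul_mul_le_card_mul (fun a b => hS.upper P hP b.1 b.2 a.1 a.2)
      (fun a : Fin 3 × Fin 3 => B a.1 a.2)
    convert h using 1
    · simp only [Pquad, Fintype.sum_prod_type]
    · rw [mnorm_sq_eq_sum, Fintype.card_prod, Fintype.card_fin]
      push_cast
      ring

lemma fderiv_zero_eq_of_msym_eq_zero (hS : PDelta p δ κ₀ κ₁ S) {W : Mat3} (hW : msym W = 0) :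
    fderiv ℝ S 0 = fderiv ℝ S W := by
  have hSW : (fun X => S (X + W)) = S := funext fun X => by
    rw [hS.symdep, ← msymL_apply, map_add, msymL_apply, msymL_apply, hW, add_zero, ← hS.symdep]
  calc fderiv ℝ S 0 = fderiv ℝ (fun X => S (X + W)) 0 := by rw [hSW]
    _ = fderiv ℝ S W := (fderiv_comp_add_right W).trans (congrArg _ (zero_add W))

lemma Pquad_zero_comparable (hS : PDelta p δ κ₀ κ₁ S) (hδ : 0 < δ) {B : Mat3} (hB : Bᵀ = B) :
    Comparable κ₀ (9 * κ₁) (Pquad S 0 B) (phi'' p δ 0 * mnorm B ^ 2) := by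
  -- `S` is only known to be `C¹` away from `0`, but it is invariant under adding the antisymmetric
  -- `W ≠ 0`: so `DS(0) = DS(W)`, and the bounds at `W` are limits of those at `W + τ U`, whose
  -- symmetric part `τ U` is nonzero.
  set W : Mat3 := single 0 1 1 - single 1 0 1
  set U : Mat3 := single 0 0 1
  have hW : msym W = 0 := by
    ext i j; fin_cases i <;> fin_cases j <;> simp [W, msym]
  have hW0 : W ≠ 0 := fun h => by simpa [W] using congrFun (congrFun h 0) 1
  have hU : msym U = U := msym_eq_self (by simp [U])
  have hU0 : U ≠ 0 := fun h => by simpa [U] using congrFun (congrFun h 0) 0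
  have hmsym (τ : ℝ) : msym (W + τ • U) = τ • U := by
    rw [← msymL_apply, map_add, map_smul, msymL_apply, msymL_apply, hW, hU, zero_add]
  have hpath : Tendsto (fun τ : ℝ => W + τ • U) (𝓝[>] 0) (𝓝 W) := by
    have : Continuous (fun τ : ℝ => W + τ • U) := by fun_prop
    simpa using (this.tendsto 0).mono_left nhdsWithin_le_nhds
  have hDS : ContinuousAt (fderiv ℝ S) W :=
    (hS.smooth.continuousOn_fderiv_of_isOpen isOpen_compl_singleton le_rfl).continuousAt
      (isOpen_compl_singleton.mem_nhds hW0)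
  have hPquad : ContinuousAt (fun P => Pquad S P B) W := by
    simp only [Pquad_eq_mdot, mdot_eq_inner]
    fun_prop
  have hmW : mnorm (msym W) = 0 := by rw [hW, mnorm_zero]
  have hphi : ContinuousAt (fun P => phi'' p δ (mnorm (msym P)) * mnorm B ^ 2) W := by
    have hm : Continuous fun P => mnorm (msym P) := by
      simp only [mnorm_eq_norm, ← msymL_apply]
      fun_prop
    refine ContinuousAt.mul_const ?_ _
    exact ContinuousAt.comp (continuousAt_phi'' (by rw [hmW]; linarith)) hm.continuousAt
  have h := Comparable.of_tendsto (hPquad.tendsto.comp hpath) (hphi.tendsto.comp hpath)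
    (eventually_mem_nhdsWithin.mono fun τ hτ => hS.Pquad_comparable_of_msym_ne_zero
      (by rw [hmsym]; exact smul_ne_zero (ne_of_gt hτ) hU0) hB)
  rwa [hmW, Pquad_eq_mdot, ← hS.fderiv_zero_eq_of_msym_eq_zero hW, ← Pquad_eq_mdot] at h

lemma Pquad_comparable (hS : PDelta p δ κ₀ κ₁ S) {A B : Mat3} (hA : Aᵀ = A) (hB : Bᵀ = B)
    (h : 0 < δ ∨ A ≠ 0) :
    Comparable κ₀ (9 * κ₁) (Pquad S A B) (phi'' p δ (mnorm A) * mnorm B ^ 2) := by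
  rcases eq_or_ne A 0 with rfl | hA0
  · rw [mnorm_zero]
    exact hS.Pquad_zero_comparable (h.resolve_right (not_not.2 rfl)) hB
  · have h := hS.Pquad_comparable_of_msym_ne_zero (by rwa [msym_eq_self hA]) hB
    rwa [msym_eq_self hA] at h

end PDelta

/-- For `S` with `(p,δ)`-structure and associated `F`, and symmetric `A, B` with
`δ > 0` or `A ≠ 0`: `𝒫(A,B) ∼ φ''(|A|)·|B|² ∼ |DF(A)[B]|²`, with constants depending
only on the characteristics `(κ₀, κ₁, p)` of `S`. -/
theorem Pquad_equiv_F (p κ₀ κ₁ : ℝ) (hp : 1 < p) (hκ₀ : 0 < κ₀) (hκ₁ : 0 < κ₁) :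
    ∃ c C : ℝ, 0 < c ∧ 0 < C ∧ ∀ δ : ℝ, 0 ≤ δ → ∀ S : Mat3 → Mat3,
      PDelta p δ κ₀ κ₁ S →
      ∀ A B : Mat3, Aᵀ = A → Bᵀ = B → (0 < δ ∨ A ≠ 0) →
        (c * (phi'' p δ (mnorm A) * (mnorm B) ^ 2) ≤ Pquad S A B ∧
          Pquad S A B ≤ C * (phi'' p δ (mnorm A) * (mnorm B) ^ 2)) ∧
        (c * (mnorm (fderiv ℝ (Fassoc p δ) A B)) ^ 2 ≤ Pquad S A B ∧
          Pquad S A B ≤ C * (mnorm (fderiv ℝ (Fassoc p δ) A B)) ^ 2) := by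
  set m := min 1 (p - 1)
  set M := max 1 (p - 1)
  have hm0 : 0 < m := lt_min one_pos (by linarith)
  have hM0 : 0 < M := lt_max_of_lt_left one_pos
  have hm1 : m ≤ 1 := min_le_left _ _
  have h1M : 1 ≤ M := le_max_left _ _
  have hmp : m ≤ p / 2 := by rcases min_cases 1 (p - 1) with ⟨h, _⟩ | ⟨h, _⟩ <;> linarith
  have hpM : p / 2 ≤ M := by rcases max_cases 1 (p - 1) with ⟨h, _⟩ | ⟨h, _⟩ <;> linarith
  have hc : κ₀ * (m * (M ^ 2)⁻¹) ≤ κ₀ :=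
    mul_le_of_le_one_right hκ₀.le (mul_le_one₀ hm1 (by positivity)
      (inv_le_one_of_one_le₀ (one_le_pow₀ h1M)))
  have hC : 9 * κ₁ ≤ 9 * κ₁ * (M * (m ^ 2)⁻¹) :=
    le_mul_of_one_le_right (by positivity) (one_le_mul_of_one_le_of_one_le h1M
      ((one_le_inv₀ (by positivity)).2 (pow_le_one₀ hm0.le hm1)))
  refine ⟨κ₀ * (m * (M ^ 2)⁻¹), 9 * κ₁ * (M * (m ^ 2)⁻¹), by positivity, by positivity, ?_⟩
  intro δ hδ S hS A B hA hB h
  have hγ : 0 < δ + mnorm A := by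
    rcases h with hδ0 | hA0
    · linarith [mnorm_nonneg A]
    · linarith [mnorm_pos hA0]
  have hP := hS.Pquad_comparable hA hB h
  have hφ := (phi''_comparable hm1 (min_le_right _ _) h1M (le_max_right _ _) hδ (mnorm_nonneg A)
    hγ).mul_right (sq_nonneg (mnorm B))
  have hF := mnorm_fderiv_Fassoc_sq_comparable hm0.le hm1 hmp h1M hpM hδ hA hB hγ
  have hφ0 : 0 ≤ phi'' p δ (mnorm A) * mnorm B ^ 2 := (mul_nonneg hm0.le (by positivity)).trans hφ.1
  exact ⟨hP.mono hφ0 hc hC,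
    hP.trans (hφ.trans (hF.symm (by positivity) (by positivity)) hm0.le hM0.le) hκ₀.le
      (by positivity)⟩
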